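/- Modulo the span of all boundary divisor classes of R̄_{2i+1} other than δ_0′, δ_0″, δ_0^ram, the class of the closed difference Prym divisor is determined up to a positive constant c by the two vanishing conditions Ξ^s · [D̄_{2i+1}] = 0 and Ξ^ns · [D̄_{2i+1}] = 0: namely [D̄_{2i+1}] = c( (3i+1)λ − (i/2)(δ_0′ + δ_0″) − ((2i+1)/4) δ_0^ram − ⋯ ) in Pic(R̄_{2i+1}) ⊗ ℚ. -/

import Mathlib

/-! Pairing with a Nikulin pencil kills the other boundary classes, so the two vanishing conditions
become two linear equations in the coefficients `a, b, d` of `[D̄_{2i+1}]`. Their solution space is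
the line spanned by `(3i+1, -i/2, -(2i+1)/4)`, and `a > 0` makes the scalar `c = a/(3i+1)` positive. -/

/-- The rational divisor class theory of Cornalba's compactification `R̄_g` of the
Prym moduli space: the rational Picard group `Cl` with the Hodge class `λ` and the
boundary classes `δ₀', δ₀'', δ₀^{ram}`, the span `otherBoundary` of all the
remaining boundary divisor classes, and the group of one-cycle (curve) classes
with the intersection pairing. -/
structure RBarPicQ where
  Cl : Type
  [clGroup : AddCommGroup Cl]
  [clModule : Module ℚ Cl]
  lambdaCl : Cl
  del0' : Cl
  del0'' : Cl
  del0ram : Cl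
  /-- the span of all boundary divisor classes other than `δ₀', δ₀'', δ₀^{ram}` -/
  otherBoundary : Submodule ℚ Cl
  OneCycle : Type
  pair : OneCycle → Cl →ₗ[ℚ] ℚ

attribute [instance] RBarPicQ.clGroup RBarPicQ.clModule

theorem LinearMap.map_eq_of_sub_mem {R M N : Type*} [Ring R] [AddCommGroup M] [Module R M]
    [AddCommGroup N] [Module R N]
    {p : Submodule R M} {f : M →ₗ[R] N} (hf : ∀ β ∈ p, f β = 0) {x y : M} (h : x - y ∈ p) :
    f x = f y := by
  rw [← sub_eq_zero, ← map_sub]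
  exact hf _ h

theorem nikulin_system_solution {x a b d : ℚ} (hx : 3 * x + 1 ≠ 0)
    (hS : a * (2 * x + 2) + b * (12 * x + 8) + d * 8 = 0)
    (hNS : a * (2 * x + 1) + b * (12 * x + 6) + d * 4 = 0) :
    b = -(x / 2) * (a / (3 * x + 1)) ∧ d = -((2 * x + 1) / 4) * (a / (3 * x + 1)) := by
  constructor
  · rw [mul_div_assoc', eq_div_iff hx]
    linear_combination (2 * hNS - hS) / 4
  · rw [mul_div_assoc', eq_div_iff hx]
    linear_combination ((6 * x + 3) * hS - (6 * x + 4) * hNS) / 8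

theorem diff_prym_divisor_class_determined_general (i : ℕ)
    (M : RBarPicQ) (DbarCl : M.Cl) (xiS xiNS : M.OneCycle)
    -- intersection numbers of the standard Nikulin pencil `Ξ^s`
    (hSl : M.pair xiS M.lambdaCl = 2 * (i : ℚ) + 2)
    (hS0' : M.pair xiS M.del0' = 12 * (i : ℚ) + 8)
    (hS0'' : M.pair xiS M.del0'' = 0)
    (hSram : M.pair xiS M.del0ram = 8)
    (hSother : ∀ β ∈ M.otherBoundary, M.pair xiS β = 0)
    -- intersection numbers of the non-standard Nikulin pencil `Ξ^{ns}`
    (hNSl : M.pair xiNS M.lambdaCl = 2 * (i : ℚ) + 1)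
    (hNS0' : M.pair xiNS M.del0' = 12 * (i : ℚ) + 6)
    (hNS0'' : M.pair xiNS M.del0'' = 0)
    (hNSram : M.pair xiNS M.del0ram = 4)
    (hNSother : ∀ β ∈ M.otherBoundary, M.pair xiNS β = 0)
    -- the class of `D̄_{2i+1}`, modulo the other boundary classes, with equal
    -- `δ₀'`- and `δ₀''`-coefficients and positive `λ`-coefficient
    (a b d : ℚ) (ha : 0 < a)
    (hexp : DbarCl - (a • M.lambdaCl + b • (M.del0' + M.del0'') + d • M.del0ram)
      ∈ M.otherBoundary)
    -- the two vanishing conditions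
    (hvS : M.pair xiS DbarCl = 0)
    (hvNS : M.pair xiNS DbarCl = 0) :
    ∃ c : ℚ, 0 < c ∧
      DbarCl - c • ((3 * (i : ℚ) + 1) • M.lambdaCl
        - ((i : ℚ) / 2) • (M.del0' + M.del0'')
        - ((2 * (i : ℚ) + 1) / 4) • M.del0ram) ∈ M.otherBoundary := by
  have hS := (LinearMap.map_eq_of_sub_mem hSother hexp).symm.trans hvS
  have hNS := (LinearMap.map_eq_of_sub_mem hNSother hexp).symm.trans hvNS
  simp only [map_add, map_smul, hSl, hS0', hS0'', hSram, hNSl, hNS0', hNS0'', hNSram,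
    smul_eq_mul, add_zero] at hS hNS
  obtain ⟨hb, hd⟩ := nikulin_system_solution (by positivity) hS hNS
  refine ⟨a / (3 * (i : ℚ) + 1), by positivity, ?_⟩
  convert hexp using 2
  rw [hb, hd]
  match_scalars <;> field_simp

/-- **Corollary 1.4.** Modulo the span of all boundary divisor classes of
`R̄_{2i+1}` other than `δ₀', δ₀'', δ₀^{ram}`, the class of the closed difference
Prym divisor `D̄_{2i+1}` (written as `a·λ + b·(δ₀' + δ₀'') + d·δ₀^{ram}` modulo the
other boundary, with positive `λ`-coefficient) is determined, up to a positive
constant `c`, by the two vanishing conditions `Ξ^s · [D̄_{2i+1}] = 0` and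
`Ξ^{ns} · [D̄_{2i+1}] = 0`, where `Ξ^s`, `Ξ^{ns}` are the two Nikulin pencils with
intersection numbers `Ξ^s·λ = 2i+2`, `Ξ^s·δ₀' = 12i+8`, `Ξ^s·δ₀'' = 0`,
`Ξ^s·δ₀^{ram} = 8` and `Ξ^{ns}·λ = 2i+1`, `Ξ^{ns}·δ₀' = 12i+6`, `Ξ^{ns}·δ₀'' = 0`,
`Ξ^{ns}·δ₀^{ram} = 4` (and vanishing intersection with the other boundary
classes): namely
`[D̄_{2i+1}] = c((3i+1)λ - (i/2)(δ₀' + δ₀'') - ((2i+1)/4)δ₀^{ram} - ⋯)`. -/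
theorem diff_prym_divisor_class_determined (i : ℕ) (hi : 1 ≤ i)
    (M : RBarPicQ) (DbarCl : M.Cl) (xiS xiNS : M.OneCycle)
    -- intersection numbers of the standard Nikulin pencil `Ξ^s`
    (hSl : M.pair xiS M.lambdaCl = 2 * (i : ℚ) + 2)
    (hS0' : M.pair xiS M.del0' = 12 * (i : ℚ) + 8)
    (hS0'' : M.pair xiS M.del0'' = 0)
    (hSram : M.pair xiS M.del0ram = 8)
    (hSother : ∀ β ∈ M.otherBoundary, M.pair xiS β = 0)
    -- intersection numbers of the non-standard Nikulin pencil `Ξ^{ns}`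
    (hNSl : M.pair xiNS M.lambdaCl = 2 * (i : ℚ) + 1)
    (hNS0' : M.pair xiNS M.del0' = 12 * (i : ℚ) + 6)
    (hNS0'' : M.pair xiNS M.del0'' = 0)
    (hNSram : M.pair xiNS M.del0ram = 4)
    (hNSother : ∀ β ∈ M.otherBoundary, M.pair xiNS β = 0)
    -- the class of `D̄_{2i+1}`, modulo the other boundary classes, with equal
    -- `δ₀'`- and `δ₀''`-coefficients and positive `λ`-coefficient
    (a b d : ℚ) (ha : 0 < a)
    (hexp : DbarCl - (a • M.lambdaCl + b • (M.del0' + M.del0'') + d • M.del0ram)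
      ∈ M.otherBoundary)
    -- the two vanishing conditions
    (hvS : M.pair xiS DbarCl = 0)
    (hvNS : M.pair xiNS DbarCl = 0) :
    ∃ c : ℚ, 0 < c ∧
      DbarCl - c • ((3 * (i : ℚ) + 1) • M.lambdaCl
        - ((i : ℚ) / 2) • (M.del0' + M.del0'')
        - ((2 * (i : ℚ) + 1) / 4) • M.del0ram) ∈ M.otherBoundary :=
  diff_prym_divisor_class_determined_general i M DbarCl xiS xiNS hSl hS0' hS0'' hSram hSother hNSl
    hNS0' hNS0'' hNSram hNSother a b d ha hexp hvS hvNS
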